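/- Let g ≥ 38 and 2 ≤ l ≤ g-1 be integers, set s = 1/(g+1), x = l·s, y = (l+1)s, z = (l-1)s, and define F, I, L from the gamma function as before. Set T₁ = (l/(l-1))·F(x)·I(z) and T₂ = sqrt((l/(l-1))²F(x)²I(z)² - ((l+1)/(l-1))L(y)I(z)) whenever the expression under the root is nonnegative. Then T₁ - T₂ ≥ 1 + 4(ln 2)·l·x. -/

import Mathlib

noncomputable def F (v : ℝ) : ℝ :=
  (Real.Gamma (1 / 2 + v / 2) / Real.Gamma (1 / 2 - v / 2)) ^ 2 *
    (Real.Gamma (1 - v) / Real.Gamma (1 + v))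

noncomputable def I (v : ℝ) : ℝ :=
  (Real.Gamma (1 - v / 2) / Real.Gamma (1 + v / 2)) ^ 2 *
    (Real.Gamma (1 + v) / Real.Gamma (1 - v))

noncomputable def L (v : ℝ) : ℝ := 1 / I v

/-!
Legendre's duplication formula gives `F v = 2^(-4v) I v`, and Euler's limit formula for `Γ` writes
`I v` as the product over `j ≥ 0` of `(1 + j + v/2)² (1 + j - v) / ((1 + j - v/2)² (1 + j + v))`.
Each factor lies in `[0, 1]` and differs from `1` by `v³ / (2 (1 + j - v/2)² (1 + j + v))`, so
`1 - 2v³ ≤ I v ≤ 1` for `0 ≤ v ≤ 1/2`.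

Write `c = l` and `a = 4 ln 2 · x`. Since `F x ≤ e^{-a}` and `I ≤ 1 ≤ L`, nonnegativity of the
radicand forces `c² - 1 ≤ c² e^{-2a}`, hence `2a (c² - 1) ≤ 1`: `a`, `x` and `z` are small.
Third-order Taylor bounds for `e^{-a}` then give `T₁ ≥ c (1 - a) / (c - 1)` and
`T₂ ≤ (1 - c² a) / (c - 1)`, and the difference of these two bounds is exactly `1 + c a`.
-/

open Real Finset Filter Topology

lemma abs_exp_neg_sub_le {u : ℝ} (h0 : 0 ≤ u) (h1 : u ≤ 1) :
    |exp (-u) - (1 - u + u ^ 2 / 2)| ≤ 2 * u ^ 3 / 9 := by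
  have h := exp_bound (x := -u) (by rwa [abs_neg, abs_of_nonneg h0]) (n := 3) (by norm_num)
  norm_num [sum_range_succ, Nat.factorial, abs_of_nonneg h0] at h
  convert h using 2 <;> ring

lemma two_mul_mul_sub_one_le_one_of_sub_one_le_mul_exp {q a : ℝ} (hq : 1 ≤ q)
    (h : q - 1 ≤ q * exp (-(2 * a))) : 2 * a * (q - 1) ≤ 1 := by
  have hexp : (q - 1) * exp (2 * a) ≤ q := by
    calc (q - 1) * exp (2 * a) ≤ q * exp (-(2 * a)) * exp (2 * a) := by gcongr
      _ = q := by rw [mul_assoc, ← exp_add, neg_add_cancel, exp_zero, mul_one]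
  nlinarith [add_one_le_exp (2 * a)]

lemma one_sub_le_exp_neg_mul {a x : ℝ} (ha0 : 0 ≤ a) (ha1 : a ≤ 1) (hx0 : 0 ≤ x)
    (hxa : x ≤ 3 / 8 * a) : 1 - a ≤ exp (-a) * (1 - 4 * x ^ 3) := by
  have hexp := (abs_le.1 (abs_exp_neg_sub_le ha0 ha1)).1
  have hexp1 : exp (-a) ≤ 1 := exp_le_one_iff.2 (by linarith)
  have hx3 : x ^ 3 ≤ (3 / 8 * a) ^ 3 := pow_le_pow_left₀ hx0 hxa 3
  nlinarith [mul_le_mul_of_nonneg_left hexp1 (pow_nonneg hx0 3), pow_nonneg hx0 3,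
    mul_le_mul_of_nonneg_left ha1 (sq_nonneg a), exp_pos (-a)]

lemma le_one_div_six_of_two_mul_mul_sq_sub_one_le_one {c a : ℝ} (hc : 2 ≤ c) (ha : 0 ≤ a)
    (hsmall : 2 * a * (c ^ 2 - 1) ≤ 1) : a ≤ 1 / 6 := by
  nlinarith [mul_le_mul_of_nonneg_left (by nlinarith : 3 ≤ c ^ 2 - 1) ha]

lemma sq_mul_exp_neg_sub_le {c a z : ℝ} (hc : 2 ≤ c) (ha : 0 ≤ a)
    (hsmall : 2 * a * (c ^ 2 - 1) ≤ 1) (hz0 : 0 ≤ z) (hza : z ≤ 3 / 8 * a) :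
    c ^ 2 * exp (-(2 * a)) - (c ^ 2 - 1) * (1 - 2 * z ^ 3) ≤ (1 - c ^ 2 * a) ^ 2 := by
  have hc2 : 4 ≤ c ^ 2 := by nlinarith
  have ha6 := le_one_div_six_of_two_mul_mul_sq_sub_one_le_one hc ha hsmall
  have hexp := (abs_le.1 (abs_exp_neg_sub_le (u := 2 * a) (by linarith) (by linarith))).2
  have hz3 : z ^ 3 ≤ (3 / 8 * a) ^ 3 := pow_le_pow_left₀ hz0 hza 3
  have hcubic : c ^ 2 * a ^ 3 ≤ c ^ 2 * a ^ 2 / 6 := by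
    have := mul_le_mul_of_nonneg_left ha6 (mul_nonneg (by positivity : 0 ≤ c ^ 2) (sq_nonneg a))
    nlinarith
  have hzterm : (c ^ 2 - 1) * z ^ 3 ≤ a ^ 2 / 32 := by
    have := mul_le_mul_of_nonneg_left hz3 (by linarith : 0 ≤ c ^ 2 - 1)
    nlinarith [mul_le_mul_of_nonneg_left hsmall (sq_nonneg a)]
  nlinarith [mul_le_mul_of_nonneg_left hexp (by positivity : 0 ≤ c ^ 2),
    mul_le_mul_of_nonneg_left hc2 (by positivity : 0 ≤ c ^ 2 * a ^ 2)]

lemma one_sub_sum_le_prod_one_sub {ι R : Type*} [CommRing R] [LinearOrder R]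
    [IsStrictOrderedRing R] (s : Finset ι) (f : ι → R) (h0 : ∀ i ∈ s, 0 ≤ f i)
    (h1 : ∀ i ∈ s, f i ≤ 1) :
    1 - ∑ i ∈ s, f i ≤ ∏ i ∈ s, (1 - f i) := by
  classical
  induction s using Finset.induction_on with
  | empty => simp
  | insert i s hi ih =>
    rw [sum_insert hi, prod_insert hi]
    have hfi := h0 i (mem_insert_self i s)
    have hprod : 0 ≤ ∏ j ∈ s, (1 - f j) :=
      prod_nonneg fun j hj => sub_nonneg.2 (h1 j (mem_insert_of_mem hj))
    have ih' := ih (fun j hj => h0 j (mem_insert_of_mem hj))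
      (fun j hj => h1 j (mem_insert_of_mem hj))
    have hsum : 0 ≤ ∑ j ∈ s, f j := sum_nonneg fun j hj => h0 j (mem_insert_of_mem hj)
    nlinarith [mul_le_mul_of_nonneg_left ih' (sub_nonneg.2 (h1 i (mem_insert_self i s)))]

noncomputable def iFactor (v : ℝ) (j : ℕ) : ℝ :=
  ((1 + v / 2 + j) / (1 - v / 2 + j)) ^ 2 * ((1 - v + j) / (1 + v + j))

lemma one_sub_iFactor {v : ℝ} (h0 : -1 < v) (h1 : v < 2) (j : ℕ) :
    1 - iFactor v j = v ^ 3 / (2 * ((1 - v / 2 + j) ^ 2 * (1 + v + j))) := by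
  have hj : (0 : ℝ) ≤ j := j.cast_nonneg
  have hD : (1 - v / 2 + j) ^ 2 * (1 + v + j) ≠ 0 := by
    have : (0 : ℝ) < 1 - v / 2 + j := by linarith
    have : (0 : ℝ) < 1 + v + j := by linarith
    positivity
  rw [iFactor, div_pow, div_mul_div_comm, one_sub_div hD, div_eq_div_iff hD (by positivity)]
  ring

lemma iFactor_nonneg {v : ℝ} (h0 : -1 < v) (h1 : v ≤ 1) (j : ℕ) : 0 ≤ iFactor v j := by
  have hj : (0 : ℝ) ≤ j := j.cast_nonneg
  have : (0 : ℝ) ≤ 1 - v + j := by linarith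
  have : (0 : ℝ) ≤ 1 + v + j := by linarith
  unfold iFactor
  positivity

lemma iFactor_le_one {v : ℝ} (h0 : 0 ≤ v) (h1 : v < 2) (j : ℕ) : iFactor v j ≤ 1 := by
  have hj : (0 : ℝ) ≤ j := j.cast_nonneg
  have : (0 : ℝ) ≤ 1 + v + j := by linarith
  have : 0 ≤ 1 - iFactor v j := one_sub_iFactor (by linarith) h1 j ▸ by positivity
  linarith

lemma one_sub_iFactor_le {v : ℝ} (h0 : 0 ≤ v) (h1 : v ≤ 1 / 2) (j : ℕ) :
    1 - iFactor v j ≤ 2 * v ^ 3 * (1 / (j + 1) - 1 / (j + 2)) := by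
  rw [one_sub_iFactor (by linarith) (by linarith)]
  have hj : (0 : ℝ) ≤ j := j.cast_nonneg
  have hd : (j + 1) * (j + 2) ≤ 4 * ((1 - v / 2 + j) ^ 2 * (1 + v + j)) := by
    nlinarith [mul_nonneg (mul_nonneg hj hj) h0, mul_nonneg hj h0]
  have htel : (1 : ℝ) / (j + 1) - 1 / (j + 2) = 1 / ((j + 1) * (j + 2)) := by field_simp; ring
  have : (0 : ℝ) < 1 - v / 2 + j := by linarith
  have : (0 : ℝ) < 1 + v + j := by linarith
  rw [htel, mul_one_div, div_le_div_iff₀ (by positivity) (by positivity)]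
  nlinarith [mul_le_mul_of_nonneg_left hd (pow_nonneg h0 3)]

lemma one_sub_two_mul_pow_three_le_prod_iFactor {v : ℝ} (h0 : 0 ≤ v) (h1 : v ≤ 1 / 2) (n : ℕ) :
    1 - 2 * v ^ 3 ≤ ∏ j ∈ range n, iFactor v j := by
  have hsum : ∑ j ∈ range n, (1 - iFactor v j) ≤ 2 * v ^ 3 := calc
    ∑ j ∈ range n, (1 - iFactor v j)
        ≤ ∑ j ∈ range n, 2 * v ^ 3 * (1 / ((j : ℕ) + 1 : ℝ) - 1 / ((j + 1 : ℕ) + 1 : ℝ)) := by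
      refine sum_le_sum fun j _ => (one_sub_iFactor_le h0 h1 j).trans_eq ?_
      push_cast
      ring
    _ = 2 * v ^ 3 * (1 - 1 / (n + 1)) := by
      rw [← mul_sum, sum_range_sub' (fun j : ℕ => 1 / ((j : ℝ) + 1))]
      simp
    _ ≤ 2 * v ^ 3 := by
      have : (0 : ℝ) ≤ 1 / (n + 1) := by positivity
      nlinarith [pow_nonneg h0 3]
  have hW := one_sub_sum_le_prod_one_sub (range n) (fun j => 1 - iFactor v j)
    (fun j _ => sub_nonneg.2 (iFactor_le_one h0 (by linarith) j))
    (fun j _ => by linarith [iFactor_nonneg (v := v) (by linarith) (by linarith) j])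
  simp only [sub_sub_cancel] at hW
  linarith

lemma GammaSeq_div_GammaSeq {a b : ℝ} (ha : 0 < a) (hb : 0 < b) {n : ℕ} (hn : n ≠ 0) :
    GammaSeq a n / GammaSeq b n = (n : ℝ) ^ (a - b) * ∏ j ∈ range (n + 1), ((b + j) / (a + j)) := by
  have hn' : (0 : ℝ) < n := by positivity
  have : (0 : ℝ) < ∏ j ∈ range (n + 1), (a + j) := prod_pos fun j _ => by positivity
  have : (0 : ℝ) < ∏ j ∈ range (n + 1), (b + j) := prod_pos fun j _ => by positivity
  rw [GammaSeq, GammaSeq, rpow_sub hn', prod_div_distrib]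
  field_simp

lemma GammaSeq_ratio_eq_prod_iFactor {v : ℝ} (h0 : -1 < v) (h1 : v < 1) {n : ℕ} (hn : n ≠ 0) :
    (GammaSeq (1 - v / 2) n / GammaSeq (1 + v / 2) n) ^ 2 *
      (GammaSeq (1 + v) n / GammaSeq (1 - v) n) = ∏ j ∈ range (n + 1), iFactor v j := by
  have hn' : (0 : ℝ) < n := by positivity
  rw [GammaSeq_div_GammaSeq (by linarith) (by linarith) hn,
    GammaSeq_div_GammaSeq (by linarith) (by linarith) hn, mul_pow, ← rpow_natCast,
    ← rpow_mul hn'.le]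
  have hpow :
      (n : ℝ) ^ ((1 - v / 2 - (1 + v / 2)) * (2 : ℕ)) * (n : ℝ) ^ (1 + v - (1 - v)) = 1 := by
    rw [← rpow_add hn']
    ring_nf
    exact rpow_zero _
  simp only [iFactor, prod_mul_distrib, prod_pow]
  linear_combination (∏ j ∈ range (n + 1), ((1 + v / 2 + j) / (1 - v / 2 + j))) ^ 2 *
    (∏ j ∈ range (n + 1), ((1 - v + j) / (1 + v + j))) * hpow

lemma tendsto_prod_iFactor {v : ℝ} (h0 : -1 < v) (h1 : v < 1) :
    Tendsto (fun n => ∏ j ∈ range (n + 1), iFactor v j) atTop (𝓝 (I v)) := by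
  have hlim := (((GammaSeq_tendsto_Gamma (1 - v / 2)).div (GammaSeq_tendsto_Gamma (1 + v / 2))
    (Gamma_pos_of_pos (by linarith)).ne').pow 2).mul
    ((GammaSeq_tendsto_Gamma (1 + v)).div (GammaSeq_tendsto_Gamma (1 - v))
      (Gamma_pos_of_pos (by linarith)).ne')
  refine hlim.congr' ?_
  filter_upwards [eventually_ne_atTop 0] with n hn
  exact GammaSeq_ratio_eq_prod_iFactor h0 h1 hn

lemma I_pos {v : ℝ} (h0 : -1 < v) (h1 : v < 1) : 0 < I v := by
  have : 0 < Gamma (1 - v / 2) := Gamma_pos_of_pos (by linarith)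
  have : 0 < Gamma (1 + v / 2) := Gamma_pos_of_pos (by linarith)
  have : 0 < Gamma (1 + v) := Gamma_pos_of_pos (by linarith)
  have : 0 < Gamma (1 - v) := Gamma_pos_of_pos (by linarith)
  unfold I
  positivity

lemma I_le_one {v : ℝ} (h0 : 0 ≤ v) (h1 : v < 1) : I v ≤ 1 :=
  le_of_tendsto (tendsto_prod_iFactor (by linarith) h1) <| Eventually.of_forall fun _ =>
    prod_le_one (fun j _ => iFactor_nonneg (by linarith) h1.le j)
      (fun j _ => iFactor_le_one h0 (by linarith) j)

lemma one_sub_two_mul_pow_three_le_I {v : ℝ} (h0 : 0 ≤ v) (h1 : v ≤ 1 / 2) : 1 - 2 * v ^ 3 ≤ I v :=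
  ge_of_tendsto (tendsto_prod_iFactor (by linarith) (by linarith)) <| Eventually.of_forall fun n =>
    one_sub_two_mul_pow_three_le_prod_iFactor h0 h1 (n + 1)

lemma one_le_L {v : ℝ} (h0 : 0 ≤ v) (h1 : v < 1) : 1 ≤ L v :=
  one_le_one_div (I_pos (by linarith) h1) (I_le_one h0 h1)

lemma Gamma_half_add_half_mul_Gamma_one_add_half (v : ℝ) :
    Gamma (1 / 2 + v / 2) * Gamma (1 + v / 2) = Gamma (1 + v) * 2 ^ (-v) * √π := by
  convert Gamma_mul_Gamma_add_half (1 / 2 + v / 2) using 3 <;> ring_nf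

lemma F_eq_exp_mul_I {v : ℝ} (h0 : -1 < v) (h1 : v < 1) : F v = exp (-(4 * log 2 * v)) * I v := by
  have : 0 < Gamma (1 - v / 2) := Gamma_pos_of_pos (by linarith)
  have : 0 < Gamma (1 + v / 2) := Gamma_pos_of_pos (by linarith)
  have : 0 < Gamma (1 + v) := Gamma_pos_of_pos (by linarith)
  have : 0 < Gamma (1 - v) := Gamma_pos_of_pos (by linarith)
  have hplus := Gamma_half_add_half_mul_Gamma_one_add_half v
  have hminus := Gamma_half_add_half_mul_Gamma_one_add_half (-v)
  rw [neg_neg, ← sub_eq_add_neg, neg_div, ← sub_eq_add_neg, ← sub_eq_add_neg] at hminus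
  rw [F, I, eq_div_of_mul_eq (by positivity) hplus, eq_div_of_mul_eq (by positivity) hminus,
    rpow_def_of_pos two_pos, rpow_def_of_pos two_pos]
  have hexp : exp (-(4 * log 2 * v)) = (exp (log 2 * -v) / exp (log 2 * v)) ^ 2 := by
    rw [← exp_sub, ← exp_nat_mul]
    ring_nf
  rw [hexp]
  field_simp

lemma sq_F_le_exp {v : ℝ} (h0 : 0 ≤ v) (h1 : v < 1) : F v ^ 2 ≤ exp (-(2 * (4 * log 2 * v))) := by
  rw [F_eq_exp_mul_I (by linarith) h1, mul_pow, ← exp_nat_mul, Nat.cast_ofNat, mul_neg]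
  have := I_pos (by linarith) h1
  have := I_le_one h0 h1
  refine mul_le_of_le_one_right (exp_pos _).le ?_
  nlinarith

lemma le_three_div_eight_mul_four_mul_log_two_mul {x : ℝ} (hx : 0 ≤ x) :
    x ≤ 3 / 8 * (4 * log 2 * x) := by
  nlinarith [log_two_gt_d9]

lemma one_sub_le_F_mul_I {x z : ℝ} (hz0 : 0 ≤ z) (hzx : z ≤ x) (hx : 4 * log 2 * x ≤ 1) :
    1 - 4 * log 2 * x ≤ F x * I z := by
  have hx0 : 0 ≤ x := hz0.trans hzx
  have hxa := le_three_div_eight_mul_four_mul_log_two_mul hx0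
  have hx2 : x ≤ 1 / 2 := by linarith
  have hIx := one_sub_two_mul_pow_three_le_I hx0 hx2
  have hIz := one_sub_two_mul_pow_three_le_I hz0 (hzx.trans hx2)
  have hz3 : z ^ 3 ≤ x ^ 3 := pow_le_pow_left₀ hz0 hzx 3
  have hx3 : x ^ 3 ≤ 1 / 8 := by nlinarith [pow_le_pow_left₀ hx0 hx2 3]
  have hprod : 1 - 4 * x ^ 3 ≤ I x * I z := by
    nlinarith [mul_le_mul hIx hIz (by nlinarith) (I_pos (by linarith) (by linarith)).le,
      mul_nonneg (pow_nonneg hx0 3) (pow_nonneg hz0 3)]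
  calc 1 - 4 * log 2 * x ≤ exp (-(4 * log 2 * x)) * (1 - 4 * x ^ 3) :=
        one_sub_le_exp_neg_mul (by positivity) hx hx0 hxa
    _ ≤ exp (-(4 * log 2 * x)) * (I x * I z) := by gcongr
    _ = F x * I z := by
      rw [F_eq_exp_mul_I (by linarith) (by linarith)]
      ring

lemma radicand_eq {c Φ J K : ℝ} (hc : c ≠ 1) :
    (c / (c - 1)) ^ 2 * Φ ^ 2 * J ^ 2 - (c + 1) / (c - 1) * K * J =
      (c ^ 2 * (Φ ^ 2 * J ^ 2) - (c ^ 2 - 1) * (K * J)) / (c - 1) ^ 2 := by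
  have : c - 1 ≠ 0 := sub_ne_zero.2 hc
  field_simp
  ring

lemma two_mul_mul_sub_one_le_one_of_radicand_nonneg {c Φ J K a : ℝ} (hc : 1 < c)
    (hΦ : Φ ^ 2 ≤ exp (-(2 * a))) (hJ0 : 0 < J) (hJ1 : J ≤ 1) (hK : 1 ≤ K)
    (h : 0 ≤ (c / (c - 1)) ^ 2 * Φ ^ 2 * J ^ 2 - (c + 1) / (c - 1) * K * J) :
    2 * a * (c ^ 2 - 1) ≤ 1 := by
  rw [radicand_eq hc.ne', le_div_iff₀ (by nlinarith), zero_mul, sub_nonneg] at h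
  have hc2 : 0 ≤ c ^ 2 - 1 := by nlinarith
  refine two_mul_mul_sub_one_le_one_of_sub_one_le_mul_exp (by linarith)
    (le_of_mul_le_mul_right ?_ hJ0)
  calc (c ^ 2 - 1) * J ≤ (c ^ 2 - 1) * (K * J) := by gcongr; nlinarith
    _ ≤ c ^ 2 * (Φ ^ 2 * J ^ 2) := h
    _ ≤ c ^ 2 * (exp (-(2 * a)) * J) := by gcongr; nlinarith
    _ = c ^ 2 * exp (-(2 * a)) * J := by ring

lemma sqrt_radicand_le {c Φ J K a z : ℝ} (hc : 2 ≤ c) (ha : 0 ≤ a)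
    (hsmall : 2 * a * (c ^ 2 - 1) ≤ 1) (hz0 : 0 ≤ z) (hza : z ≤ 3 / 8 * a)
    (hΦ : Φ ^ 2 ≤ exp (-(2 * a))) (hJ : 1 - 2 * z ^ 3 ≤ J) (hJ1 : J ≤ 1) (hK : 1 ≤ K) :
    √((c / (c - 1)) ^ 2 * Φ ^ 2 * J ^ 2 - (c + 1) / (c - 1) * K * J) ≤
      (1 - c ^ 2 * a) / (c - 1) := by
  have hc1 : 0 < c - 1 := by linarith
  have ha6 := le_one_div_six_of_two_mul_mul_sq_sub_one_le_one hc ha hsmall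
  have hJ0 : 0 ≤ J := by nlinarith [pow_le_pow_left₀ hz0 (by linarith : z ≤ 1 / 2) 3]
  have hΦJ : Φ ^ 2 * J ^ 2 ≤ exp (-(2 * a)) :=
    (mul_le_of_le_one_right (sq_nonneg _) (pow_le_one₀ hJ0 hJ1)).trans hΦ
  rw [sqrt_le_iff, radicand_eq (by linarith : 1 < c).ne', div_pow]
  refine ⟨div_nonneg (by nlinarith) hc1.le, div_le_div_of_nonneg_right ?_ (by positivity)⟩
  calc c ^ 2 * (Φ ^ 2 * J ^ 2) - (c ^ 2 - 1) * (K * J)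
      ≤ c ^ 2 * exp (-(2 * a)) - (c ^ 2 - 1) * (1 - 2 * z ^ 3) := by
        gcongr
        · nlinarith
        · nlinarith
    _ ≤ (1 - c ^ 2 * a) ^ 2 := sq_mul_exp_neg_sub_le hc ha hsmall hz0 hza

theorem t_minus_sq_lower_bound_general (g l : ℕ) (hl : 2 ≤ l) (hlg : l ≤ g - 1)
    (s x y z : ℝ) (hs : s = 1 / (g + 1)) (hx : x = l * s) (hy : y = (l + 1) * s)
    (hz : z = (l - 1) * s)
    (hrad : 0 ≤ ((l : ℝ) / (l - 1)) ^ 2 * (F x) ^ 2 * (I z) ^ 2 -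
      ((l + 1 : ℝ) / (l - 1)) * L y * I z) :
    1 + 4 * Real.log 2 * l * x ≤
      (l : ℝ) / (l - 1) * F x * I z -
        Real.sqrt (((l : ℝ) / (l - 1)) ^ 2 * (F x) ^ 2 * (I z) ^ 2 -
          ((l + 1 : ℝ) / (l - 1)) * L y * I z) := by
  have hl' : (2 : ℝ) ≤ l := by exact_mod_cast hl
  have hlg' : (l : ℝ) + 1 ≤ g := by exact_mod_cast (by omega : l + 1 ≤ g)
  have hs0 : 0 < s := by rw [hs]; positivity
  have hz0 : 0 ≤ z := by rw [hz]; nlinarith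
  have hzx : z ≤ x := by rw [hz, hx]; nlinarith
  have hxy : x ≤ y := by rw [hx, hy]; nlinarith
  have hy1 : y < 1 := by rw [hy, hs, mul_one_div, div_lt_one (by positivity)]; linarith
  have hx0 : 0 ≤ x := hz0.trans hzx
  set a := 4 * log 2 * x with ha
  have ha0 : 0 ≤ a := by positivity
  have hΦ : F x ^ 2 ≤ exp (-(2 * a)) := sq_F_le_exp hx0 (by linarith)
  have hsmall : 2 * a * ((l : ℝ) ^ 2 - 1) ≤ 1 :=
    two_mul_mul_sub_one_le_one_of_radicand_nonneg (by linarith) hΦ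
      (I_pos (by linarith) (by linarith)) (I_le_one hz0 (by linarith))
      (one_le_L (hx0.trans hxy) hy1) hrad
  have ha1 := le_one_div_six_of_two_mul_mul_sq_sub_one_le_one hl' ha0 hsmall
  have hza : z ≤ 3 / 8 * a := hzx.trans (le_three_div_eight_mul_four_mul_log_two_mul hx0)
  have hT₁ : 1 - a ≤ F x * I z := one_sub_le_F_mul_I hz0 hzx (by linarith)
  have hT₂ := sqrt_radicand_le hl' ha0 hsmall hz0 hza hΦ
    (one_sub_two_mul_pow_three_le_I hz0 (by linarith)) (I_le_one hz0 (by linarith))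
    (one_le_L (hx0.trans hxy) hy1)
  have hl1 : (l : ℝ) - 1 ≠ 0 := by linarith
  calc 1 + 4 * log 2 * l * x = l / (l - 1) * (1 - a) - (1 - l ^ 2 * a) / (l - 1) := by
        rw [ha]
        field_simp
        ring
    _ ≤ _ := by
      rw [mul_assoc]
      exact sub_le_sub (mul_le_mul_of_nonneg_left hT₁ (div_nonneg (by linarith) (by linarith)))
        hT₂

theorem t_minus_sq_lower_bound (g l : ℕ) (hg : 38 ≤ g) (hl : 2 ≤ l) (hlg : l ≤ g - 1)
    (s x y z : ℝ) (hs : s = 1 / (g + 1)) (hx : x = l * s) (hy : y = (l + 1) * s)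
    (hz : z = (l - 1) * s)
    (hrad : 0 ≤ ((l : ℝ) / (l - 1)) ^ 2 * (F x) ^ 2 * (I z) ^ 2 -
      ((l + 1 : ℝ) / (l - 1)) * L y * I z) :
    1 + 4 * Real.log 2 * l * x ≤
      (l : ℝ) / (l - 1) * F x * I z -
        Real.sqrt (((l : ℝ) / (l - 1)) ^ 2 * (F x) ^ 2 * (I z) ^ 2 -
          ((l + 1 : ℝ) / (l - 1)) * L y * I z) :=
  t_minus_sq_lower_bound_general g l hl hlg s x y z hs hx hy hz hrad
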